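/- Let φ, F be twice differentiable on an interval, with F' > 0, and fix s and l* with 0 < l* and s − l* in the interval. Then the limit as ε ↓ 0 of [ε H G / (1 − (φ'(s)/φ'(s+ε)) e^{−εH})], where H = F'(s)/(F(s) − F(s−l*)) and G is a constant, equals G·F'(s)φ'(s)/(φ''(s)(F(s)−F(s−l*)) + F'(s)φ'(s)), provided the denominator expression φ''(s)(F(s)−F(s−l*)) + F'(s)φ'(s) ≠ 0. -/

import Mathlib

/-!
The denominator vanishes at `ε = 0` and has derivative `φ''(s)/φ'(s) + H` there, so the limit is
l'Hôpital's rule in its simplest form: `ε / g ε → (g' 0)⁻¹` when `g 0 = 0`. When `φ'(s) = 0`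
the denominator is identically `1` and both sides are `0`.
-/

open Filter Topology Real

theorem HasDerivAt.tendsto_sub_div {𝕜 : Type*} [NontriviallyNormedField 𝕜] {g : 𝕜 → 𝕜}
    {L a : 𝕜} (hg : HasDerivAt g L a) (ha : g a = 0) (hL : L ≠ 0) :
    Tendsto (fun x => (x - a) / g x) (𝓝[≠] a) (𝓝 L⁻¹) :=
  ((hasDerivAt_iff_tendsto_slope.mp hg).inv₀ hL).congr fun x => by
    rw [slope_def_field, ha, sub_zero, inv_div]

theorem hasDerivAt_one_sub_div_mul_exp {f : ℝ → ℝ} {f' s H : ℝ} (hf : HasDerivAt f f' s)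
    (hs : f s ≠ 0) :
    HasDerivAt (fun ε => 1 - f s / f (s + ε) * exp (-(ε * H))) (f' / f s + H) 0 := by
  have hshift : HasDerivAt (fun ε => f (s + ε)) f' 0 :=
    HasDerivAt.comp_const_add s 0 (by rwa [add_zero])
  have hexp : HasDerivAt (fun ε => exp (-(ε * H))) (-H) 0 := by
    simpa using ((hasDerivAt_id (0 : ℝ)).mul_const H).neg.exp
  refine ((((hasDerivAt_const 0 (f s)).fun_div hshift (by simpa using hs)).fun_mul hexp).const_sub
    1).congr_deriv ?_
  simp only [add_zero, zero_mul, neg_zero, exp_zero]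
  field_simp
  ring

theorem stmt_10_general (φ F : ℝ → ℝ) (s lstar G : ℝ)
    (hφ : ContDiffAt ℝ 2 φ s)
    (hFdiff : F s - F (s - lstar) ≠ 0)
    (H : ℝ) (hH : H = deriv F s / (F s - F (s - lstar)))
    (hden : deriv (deriv φ) s * (F s - F (s - lstar)) + deriv F s * deriv φ s ≠ 0) :
    Filter.Tendsto
      (fun ε : ℝ => ε * H * G / (1 - (deriv φ s / deriv φ (s + ε)) * Real.exp (-(ε * H))))
      (nhdsWithin 0 (Set.Ioi 0))
      (nhds (G * (deriv F s * deriv φ s) /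
        (deriv (deriv φ) s * (F s - F (s - lstar)) + deriv F s * deriv φ s))) := by
  by_cases h0 : deriv φ s = 0
  · simp only [h0, zero_div, zero_mul, sub_zero, div_one, mul_zero]
    exact tendsto_nhdsWithin_of_tendsto_nhds
      (((continuous_id.mul continuous_const).mul continuous_const).tendsto' 0 0 (by simp))
  set D := F s - F (s - lstar)
  have hderiv : deriv (deriv φ) s / deriv φ s + H
      = (deriv (deriv φ) s * D + deriv F s * deriv φ s) / (deriv φ s * D) := by
    rw [hH]; field_simp
  have hdenom := hasDerivAt_one_sub_div_mul_exp (H := H)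
    ((hφ.derivWithin (m := 1) (by norm_num)).differentiableAt one_ne_zero).hasDerivAt h0
  have hlim := ((hdenom.tendsto_sub_div (by simp [h0])
    (hderiv ▸ div_ne_zero hden (mul_ne_zero h0 hFdiff))).mono_left
    (nhdsGT_le_nhdsNE 0)).const_mul (H * G)
  convert hlim using 2 with ε
  · simp only [sub_zero]; ring
  · rw [hderiv, hH]; field_simp

theorem stmt_10 (φ F : ℝ → ℝ) (s lstar G : ℝ) (hl : 0 < lstar)
    (hφ : ContDiffAt ℝ 2 φ s) (hF : DifferentiableAt ℝ F s)
    (hF' : 0 < deriv F s) (hFdiff : F s - F (s - lstar) ≠ 0)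
    (H : ℝ) (hH : H = deriv F s / (F s - F (s - lstar)))
    (hden : deriv (deriv φ) s * (F s - F (s - lstar)) + deriv F s * deriv φ s ≠ 0) :
    Filter.Tendsto
      (fun ε : ℝ => ε * H * G / (1 - (deriv φ s / deriv φ (s + ε)) * Real.exp (-(ε * H))))
      (nhdsWithin 0 (Set.Ioi 0))
      (nhds (G * (deriv F s * deriv φ s) /
        (deriv (deriv φ) s * (F s - F (s - lstar)) + deriv F s * deriv φ s))) :=
  stmt_10_general φ F s lstar G hφ hFdiff H hH hden
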